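/- arXiv:0704.2929 — 2 statements merged into one kernel-verified Lean document; each statement's English description precedes it below -/
import Mathlib

section
/- If A is a real symmetric positive definite matrix and B is real symmetric, then every solution of the second-order linear system A y″ + B y = 0 with B positive definite remains bounded for all time. -/
/-!
The energy `⟪y', A y'⟫ + ⟪y, B y⟫` is conserved along solutions of `A y'' + B y = 0`, because
its derivative is `2 ⟪y', A y'' + B y⟫` by symmetry of `A` and `B`. Positivity of `A` bounds the
potential term `⟪y, B y⟫` by the initial energy, and positive definiteness of `B` makes that term
dominate `c ‖y‖²` for some `c > 0`, by compactness of the unit sphere.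
-/

open Matrix

theorem exists_pos_mul_norm_sq_le_of_isHomogeneous {E : Type*} [NormedAddCommGroup E]
    [NormedSpace ℝ E] [FiniteDimensional ℝ E] {Q : E → ℝ} (hQ : Continuous Q)
    (hpos : ∀ x ≠ 0, 0 < Q x) (hsmul : ∀ (a : ℝ) (x : E), Q (a • x) = a ^ 2 * Q x) :
    ∃ c > 0, ∀ x, c * ‖x‖ ^ 2 ≤ Q x := by
  have hQ0 : Q 0 = 0 := by simpa using hsmul 0 0
  rcases subsingleton_or_nontrivial E with hE | hE
  · exact ⟨1, one_pos, fun x => by simp [Subsingleton.elim x 0, hQ0]⟩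
  obtain ⟨u, hu, hmin⟩ := (isCompact_sphere (0 : E) 1).exists_isMinOn
    (NormedSpace.sphere_nonempty.mpr zero_le_one) hQ.continuousOn
  refine ⟨Q u, hpos u (ne_zero_of_mem_unit_sphere ⟨u, hu⟩), fun x => ?_⟩
  rcases eq_or_ne x 0 with rfl | hx
  · simp [hQ0]
  have hxn : 0 < ‖x‖ := norm_pos_iff.mpr hx
  have hux : Q u ≤ Q (‖x‖⁻¹ • x) := hmin (by simp [norm_smul, hxn.ne'])
  calc Q u * ‖x‖ ^ 2 ≤ Q (‖x‖⁻¹ • x) * ‖x‖ ^ 2 := by gcongr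
    _ = Q x := by rw [hsmul]; field_simp

variable {ι : Type*} [Fintype ι]

theorem Matrix.PosDef.exists_pos_mul_norm_sq_le {M : Matrix ι ι ℝ} (hM : M.PosDef) :
    ∃ c > 0, ∀ x : ι → ℝ, c * ‖x‖ ^ 2 ≤ x ⬝ᵥ M *ᵥ x :=
  exists_pos_mul_norm_sq_le_of_isHomogeneous (by fun_prop)
    (fun x hx => by simpa using hM.dotProduct_mulVec_pos hx)
    (fun a x => by simp only [mulVec_smul, smul_dotProduct, dotProduct_smul, smul_eq_mul]; ring)

theorem Matrix.IsSymm.dotProduct_mulVec_comm {R : Type*} [CommSemiring R] {M : Matrix ι ι R}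
    (hM : M.IsSymm) (v w : ι → R) : v ⬝ᵥ M *ᵥ w = w ⬝ᵥ M *ᵥ v := by
  rw [dotProduct_mulVec, dotProduct_comm, ← vecMul_transpose, hM.eq]

theorem HasDerivAt.dotProduct_mulVec_self {M : Matrix ι ι ℝ} (hM : M.IsSymm) {f : ℝ → ι → ℝ}
    {f' : ι → ℝ} {t : ℝ} (hf : HasDerivAt f f' t) :
    HasDerivAt (fun s => f s ⬝ᵥ M *ᵥ f s) (2 * (f' ⬝ᵥ M *ᵥ f t)) t := by
  classical
  have h := (toLinearMap₂' ℝ M).toContinuousBilinearMap.hasDerivAt_of_bilinear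
    (fun _ => hf) (fun _ => hf)
  simp only [LinearMap.toContinuousBilinearMap_apply, toLinearMap₂'_apply'] at h
  exact h.congr_deriv (by rw [hM.dotProduct_mulVec_comm (f t) f']; ring)

def oscillatorEnergy (A B : Matrix ι ι ℝ) (x v : ι → ℝ) : ℝ :=
  v ⬝ᵥ A *ᵥ v + x ⬝ᵥ B *ᵥ x

theorem hasDerivAt_oscillatorEnergy {A B : Matrix ι ι ℝ} (hA : A.IsSymm) (hB : B.IsSymm)
    {y y' y'' : ℝ → ι → ℝ} {t : ℝ} (hy : HasDerivAt y (y' t) t)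
    (hy' : HasDerivAt y' (y'' t) t) (hode : A *ᵥ y'' t + B *ᵥ y t = 0) :
    HasDerivAt (fun s => oscillatorEnergy A B (y s) (y' s)) 0 t := by
  have h := (hy'.dotProduct_mulVec_self hA).add (hy.dotProduct_mulVec_self hB)
  refine h.congr_deriv ?_
  rw [hA.dotProduct_mulVec_comm, ← mul_add, ← dotProduct_add, hode, dotProduct_zero, mul_zero]

theorem oscillatorEnergy_eq_of_ode {A B : Matrix ι ι ℝ} (hA : A.IsSymm) (hB : B.IsSymm)
    {y y' y'' : ℝ → ι → ℝ} (hy : ∀ t, HasDerivAt y (y' t) t) (hy' : ∀ t, HasDerivAt y' (y'' t) t)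
    (hode : ∀ t, A *ᵥ y'' t + B *ᵥ y t = 0) (t s : ℝ) :
    oscillatorEnergy A B (y t) (y' t) = oscillatorEnergy A B (y s) (y' s) :=
  have hE t := hasDerivAt_oscillatorEnergy hA hB (hy t) (hy' t) (hode t)
  is_const_of_deriv_eq_zero (fun t => (hE t).differentiableAt) (fun t => (hE t).deriv) t s

/-- Lagrange's stability claim (correctly established): if `A`, `B` are real
symmetric positive definite, every solution of `A y″ + B y = 0` is bounded. -/
theorem small_oscillations_stable {n : ℕ} (A B : Matrix (Fin n) (Fin n) ℝ)
    (hA : A.PosDef) (hB : B.PosDef)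
    (y y' y'' : ℝ → Fin n → ℝ)
    (hy : ∀ t : ℝ, HasDerivAt y (y' t) t)
    (hy' : ∀ t : ℝ, HasDerivAt y' (y'' t) t)
    (hode : ∀ t : ℝ, A.mulVec (y'' t) + B.mulVec (y t) = 0) :
    ∃ C : ℝ, ∀ t : ℝ, ‖y t‖ ≤ C := by
  obtain ⟨c, hc, hcB⟩ := hB.exists_pos_mul_norm_sq_le
  have hE := oscillatorEnergy_eq_of_ode (isHermitian_iff_isSymm.mp hA.isHermitian)
    (isHermitian_iff_isSymm.mp hB.isHermitian) hy hy' hode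
  refine ⟨√(oscillatorEnergy A B (y 0) (y' 0) / c), fun t => Real.le_sqrt_of_sq_le ?_⟩
  rw [le_div_iff₀ hc, mul_comm]
  calc c * ‖y t‖ ^ 2 ≤ y t ⬝ᵥ B *ᵥ y t := hcB (y t)
    _ ≤ oscillatorEnergy A B (y t) (y' t) :=
      le_add_of_nonneg_left (by simpa using hA.posSemidef.dotProduct_mulVec_nonneg (y' t))
    _ = oscillatorEnergy A B (y 0) (y' 0) := hE t 0
end

section
/- Let A be an n×n complex matrix with eigenvalue λ of algebraic multiplicity 1. Then any nonzero column of the adjugate matrix adj(A − λI) is an eigenvector of A for λ. -/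
/-!
A root `λ` of the characteristic polynomial makes `A - λI` singular, so
`(A - λI) * adj (A - λI) = det (A - λI) • 1 = 0`: every column of the adjugate lies in the
kernel of `A - λI`.
-/

open Polynomial

namespace Matrix

theorem mulVec_col_eq_col_mul {l m n α : Type*} [Fintype m] [NonUnitalNonAssocSemiring α]
    (M : Matrix l m α) (N : Matrix m n α) (j : n) :
    M *ᵥ (fun i => N i j) = fun i => (M * N) i j :=
  funext fun _ => mul_apply'.symm

variable {m R : Type*} [Fintype m] [DecidableEq m] [CommRing R]

theorem det_sub_smul_one_eq_zero_of_isRoot_charpoly {A : Matrix m m R} {r : R}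
    (hr : A.charpoly.IsRoot r) : (A - r • 1).det = 0 := by
  rw [← neg_sub, det_neg, smul_one_eq_diagonal, ← scalar_apply, ← eval_charpoly, hr.eq_zero,
    mul_zero]

theorem mulVec_adjugate_col_eq_zero {M : Matrix m m R} (hM : M.det = 0) (j : m) :
    M *ᵥ (fun i => M.adjugate i j) = 0 := by
  rw [mulVec_col_eq_col_mul, mul_adjugate, hM, zero_smul]
  rfl

theorem mulVec_eq_smul_of_sub_smul_one_mulVec_eq_zero {A : Matrix m m R} {r : R} {v : m → R}
    (hv : (A - r • 1) *ᵥ v = 0) : A *ᵥ v = r • v := by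
  rwa [sub_mulVec, smul_mulVec, one_mulVec, sub_eq_zero] at hv

end Matrix

theorem adjugate_column_eigenvector_general {n : ℕ} (A : Matrix (Fin n) (Fin n) ℂ) (lam : ℂ)
    (h : (A.charpoly).rootMultiplicity lam = 1) (j : Fin n)
    (v : Fin n → ℂ) (hv : v = fun i => (A - lam • 1).adjugate i j) :
    A.mulVec v = lam • v := by
  have hroot : A.charpoly.IsRoot lam := by
    rw [← rootMultiplicity_pos A.charpoly_monic.ne_zero, h]
    exact Nat.one_pos
  subst hv
  exact Matrix.mulVec_eq_smul_of_sub_smul_one_mulVec_eq_zero <|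
    Matrix.mulVec_adjugate_col_eq_zero (Matrix.det_sub_smul_one_eq_zero_of_isRoot_charpoly hroot) j

/-- Lagrange: if `λ` is a simple root of the characteristic polynomial of `A`,
then any nonzero column of `adj (A − λI)` is an eigenvector of `A` for `λ`. -/
theorem adjugate_column_eigenvector {n : ℕ} (A : Matrix (Fin n) (Fin n) ℂ) (lam : ℂ)
    (h : (A.charpoly).rootMultiplicity lam = 1) (j : Fin n)
    (v : Fin n → ℂ) (hv : v = fun i => (A - lam • 1).adjugate i j) (hv0 : v ≠ 0) :
    A.mulVec v = lam • v :=
  adjugate_column_eigenvector_general A lam h j v hv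
end
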